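/- arXiv:1503.08474 — 4 statements merged into one kernel-verified Lean document; each statement's English description precedes it below -/
import Mathlib

section
/- Let A and B be groups and let I be any (index) type. Then the wreath product (Π_{i ∈ I} A) ≀ B of the Cartesian power of A by B lies in var(A ≀ B), i.e., every law of A ≀ B is a law of (I → A) ≀ B. -/
/-- A word `w` in the free group on `k` generators is a law of the group `H`
if every homomorphism from the free group to `H` sends `w` to `1`. -/
def IsGroupLaw (H : Type*) [Group H] {k : ℕ} (w : FreeGroup (Fin k)) : Prop :=
  ∀ φ : FreeGroup (Fin k) →* H, φ w = 1

/-- `G` lies in the variety generated by `H`: every law of `H` is a law of `G`. -/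
def InVariety (G : Type*) [Group G] (H : Type*) [Group H] : Prop :=
  ∀ (k : ℕ) (w : FreeGroup (Fin k)), IsGroupLaw H w → IsGroupLaw G w

/-- The shifting action of `B` on the Cartesian power `B → A`:
`(b • f) x = f (b⁻¹ * x)`. -/
def wreathShift (A B : Type*) [Group A] [Group B] : B →* MulAut (B → A) where
  toFun b :=
    { toFun := fun f x => f (b⁻¹ * x)
      invFun := fun f x => f (b * x)
      left_inv := fun f => by funext x; simp [mul_assoc]
      right_inv := fun f => by funext x; simp [mul_assoc]
      map_mul' := fun f g => rfl }
  map_one' := by ext f x; simp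
  map_mul' b₁ b₂ := by ext f x; simp [mul_assoc]

/-- The (standard, Cartesian) wreath product `A ≀ B = (B → A) ⋊ B`. -/
abbrev WreathProduct (A B : Type*) [Group A] [Group B] : Type _ :=
  SemidirectProduct (B → A) B (wreathShift A B)

/-!
Evaluating the base coordinates at `i ∈ I` gives homomorphisms `(I → A) ≀ B → A ≀ B`, and together
with the projection onto `B` they separate the points of `(I → A) ≀ B`. A group whose points are
separated by homomorphisms into `H` embeds into a power of `H`, so it satisfies every law of `H`.
-/

theorem IsGroupLaw.of_separating {G H ι : Type*} [Group G] [Group H] {k : ℕ}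
    {w : FreeGroup (Fin k)} (f : ι → G →* H) (hf : ∀ g, (∀ i, f i g = 1) → g = 1)
    (hw : IsGroupLaw H w) : IsGroupLaw G w :=
  fun φ => hf _ fun i => hw ((f i).comp φ)

namespace WreathProduct

variable {A A' : Type*} (B : Type*) [Group A] [Group A'] [Group B]

def mapBase (f : A →* A') : WreathProduct A B →* WreathProduct A' B :=
  SemidirectProduct.map (f.compLeft B) (MonoidHom.id B) fun _ => rfl

theorem eq_one_of_forall_mapBase_eval {I : Type*} (g : WreathProduct (I → A) B)
    (hright : g.right = 1) (hleft : ∀ i, mapBase B (Pi.evalMonoidHom (fun _ => A) i) g = 1) :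
    g = 1 := by
  refine SemidirectProduct.ext (funext fun x => funext fun i => ?_) hright
  exact congrFun (congrArg SemidirectProduct.left (hleft i)) x

end WreathProduct

theorem cartesian_power_wreath_in_variety (A B : Type*) [Group A] [Group B] (I : Type*) :
    InVariety (WreathProduct (I → A) B) (WreathProduct A B) := by
  intro k w hw
  refine hw.of_separating
    (fun o : Option I => o.elim (SemidirectProduct.inr.comp SemidirectProduct.rightHom)
      fun i => WreathProduct.mapBase B (Pi.evalMonoidHom (fun _ => A) i))
    fun g hg => ?_
  refine WreathProduct.eq_one_of_forall_mapBase_eval B g ?_ fun i => hg (some i)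
  exact SemidirectProduct.inr_injective ((hg none).trans (map_one _).symm)
end

section
/- Let A be an abelian group and let B, B* be groups such that B* is a homomorphic image of B (there is a surjective group homomorphism B →* B*). Then the wreath product A ≀ B* lies in var(A ≀ B), i.e., every law of A ≀ B is a law of A ≀ B*. -/
/-! If `f : B →* B'` is onto, the elements of `A ≀ B` whose base function factors through `f`
form a subgroup, and `(g ∘ f, b) ↦ (g, f b)` maps it homomorphically onto `A ≀ B'`. Varieties
are closed under subgroups and quotients, so `A ≀ B'` lies in the variety of `A ≀ B`. -/

theorem IsGroupLaw.of_injective {G H : Type*} [Group G] [Group H] {e : G →* H}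
    (he : Function.Injective e) {k : ℕ} {w : FreeGroup (Fin k)} (hw : IsGroupLaw H w) :
    IsGroupLaw G w := fun φ =>
  he <| by rw [map_one, ← MonoidHom.comp_apply, hw]

theorem IsGroupLaw.of_surjective {G H : Type*} [Group G] [Group H] {q : G →* H}
    (hq : Function.Surjective q) {k : ℕ} {w : FreeGroup (Fin k)} (hw : IsGroupLaw G w) :
    IsGroupLaw H w := by
  intro φ
  obtain ⟨ψ, rfl⟩ : ∃ ψ : FreeGroup (Fin k) →* G, q.comp ψ = φ :=
    ⟨FreeGroup.lift fun i => Function.surjInv hq (φ (FreeGroup.of i)),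
      FreeGroup.ext_hom _ _ fun i => by simp [Function.surjInv_eq hq]⟩
  rw [MonoidHom.comp_apply, hw, map_one]

theorem InVariety.of_injective_of_surjective {G H K : Type*} [Group G] [Group H] [Group K]
    {e : K →* H} (he : Function.Injective e) {q : K →* G} (hq : Function.Surjective q) :
    InVariety G H := fun _ _ hw =>
  (hw.of_injective he).of_surjective hq

section

variable (A : Type*) {B B' : Type*} [Group A] [Group B] [Group B'] (f : B →* B')

/-- Models the subgroup of `A ≀ B` of elements whose base function factors through `f`. -/
abbrev WreathProductVia : Type _ :=
  SemidirectProduct (B' → A) B ((wreathShift A B').comp f)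

def precompMonoidHom : (B' → A) →* (B → A) where
  toFun g := g ∘ f
  map_one' := rfl
  map_mul' _ _ := rfl

theorem precompMonoidHom_injective (hf : Function.Surjective f) :
    Function.Injective (precompMonoidHom A f) := fun _ _ h =>
  hf.injective_comp_right h

def WreathProductVia.toWreathProductDomain : WreathProductVia A f →* WreathProduct A B :=
  SemidirectProduct.map (precompMonoidHom A f) (MonoidHom.id B) fun b => by
    ext g x
    simp [precompMonoidHom, wreathShift]

def WreathProductVia.toWreathProductCodomain : WreathProductVia A f →* WreathProduct A B' :=
  SemidirectProduct.map (MonoidHom.id _) f fun _ => rfl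

variable {A f}

theorem WreathProductVia.toWreathProductDomain_injective (hf : Function.Surjective f) :
    Function.Injective (toWreathProductDomain A f) := fun x y h => by
  have hl := congrArg SemidirectProduct.left h
  have hr := congrArg SemidirectProduct.right h
  exact SemidirectProduct.ext (precompMonoidHom_injective A f hf hl) hr

theorem WreathProductVia.toWreathProductCodomain_surjective (hf : Function.Surjective f) :
    Function.Surjective (toWreathProductCodomain A f) := fun x => by
  obtain ⟨b, hb⟩ := hf x.right
  exact ⟨⟨x.left, b⟩, SemidirectProduct.ext rfl hb⟩

end

theorem wreath_quotient_active_in_variety_of_comm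
    (A B B' : Type*) [CommGroup A] [Group B] [Group B']
    (f : B →* B') (hf : Function.Surjective f) :
    InVariety (WreathProduct A B') (WreathProduct A B) :=
  .of_injective_of_surjective (WreathProductVia.toWreathProductDomain_injective hf)
    (WreathProductVia.toWreathProductCodomain_surjective hf)
end

section
/- Let F = FreeGroup (Fin 2) and let R = F / K, where K is the normal subgroup of F generated by the third term of the lower central series of F together with all cubes of elements of F (so R = F_2(𝔑_{2,3})). Then var(R ≀ C_2) ≠ 𝔑_{2,3} 𝔄_2: there exists a group G having a normal subgroup N with N nilpotent of class at most 2 and exponent dividing 3 and G/N abelian of exponent dividing 2, such that some law of R ≀ C_2 is not a law of G. -/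
/-!
If a subgroup `M` of index two in `W` is nilpotent of class at most two, then
`⁅⁅y², x⁆, ⁅y, x⁆⁆ = 1` for all `x y : W`. Indeed `y²` and `⁅y, x⁆` lie in `M`, and so does one of
`y`, `x`, `x y⁻¹`. If `y ∈ M` then `⁅y², x⁆ = ⁅y, ⁅y, x⁆⁆ ⁅y, x⁆²`; otherwise `⁅y², x⁆` is the
commutator of `y²` with `x` or with `x y⁻¹`, an element of `⁅M, M⁆`, which is central in `M`. For
`R ≀ C₂` take `M` to be the base group.

The law fails in `H ≀ (C₂ × C₂)`, `H` the Heisenberg group of order 27: its base group has class two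
and exponent three and the quotient is `C₂ × C₂`, but elements `x`, `y` whose tops are distinct
involutions have none of `y`, `x`, `x y⁻¹` in the base.
-/

open scoped commutatorElement

section LowerCentralSeries

variable {G : Type*} [Group G]

theorem Subgroup.commutatorElement_commutatorElement_eq_one {S : Subgroup G}
    (hS : S.lowerCentralSeries 2 = ⊥) {a b c : G} (ha : a ∈ S) (hb : b ∈ S) (hc : c ∈ S) :
    ⁅⁅a, b⁆, c⁆ = 1 := by
  rw [← Subgroup.mem_bot, ← hS]
  exact Subgroup.commutator_mem_commutator (Subgroup.commutator_mem_commutator ha hb) hc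

theorem Subgroup.top_lowerCentralSeries_two_eq_bot_iff :
    (⊤ : Subgroup G).lowerCentralSeries 2 = ⊥ ↔ ∀ a b c : G, ⁅⁅a, b⁆, c⁆ = 1 := by
  refine ⟨fun h a b c => commutatorElement_commutatorElement_eq_one h trivial trivial trivial,
    fun h => Subgroup.lowerCentralSeries_succ_eq_bot _ ?_⟩
  rw [Subgroup.top_lowerCentralSeries_one, _root_.commutator_def, Subgroup.commutator_le]
  exact fun a _ b _ => Subgroup.mem_center_iff.mpr fun c =>
    (commutatorElement_eq_one_iff_commute.mp (h a b c)).symm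

theorem Pi.top_lowerCentralSeries_two_eq_bot {ι : Type*}
    (h : (⊤ : Subgroup G).lowerCentralSeries 2 = ⊥) :
    (⊤ : Subgroup (ι → G)).lowerCentralSeries 2 = ⊥ :=
  Subgroup.top_lowerCentralSeries_two_eq_bot_iff.mpr fun f g k => funext fun i =>
    Subgroup.top_lowerCentralSeries_two_eq_bot_iff.mp h (f i) (g i) (k i)

theorem QuotientGroup.top_lowerCentralSeries_eq_bot_iff {N : Subgroup G} [N.Normal] {n : ℕ} :
    (⊤ : Subgroup (G ⧸ N)).lowerCentralSeries n = ⊥ ↔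
      (⊤ : Subgroup G).lowerCentralSeries n ≤ N := by
  rw [← Subgroup.map_top_of_surjective _ (QuotientGroup.mk'_surjective N),
    ← Subgroup.map_lowerCentralSeries, Subgroup.map_eq_bot_iff, QuotientGroup.ker_mk']

theorem Subgroup.top_lowerCentralSeries_eq_bot_iff {S : Subgroup G} {n : ℕ} :
    (⊤ : Subgroup S).lowerCentralSeries n = ⊥ ↔ S.lowerCentralSeries n = ⊥ := by
  rw [← Subgroup.map_eq_bot_iff_of_injective _ S.subtype_injective,
    Subgroup.top_subtype_lowerCentralSeries]

end LowerCentralSeries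

namespace SemidirectProduct

variable {N H : Type*} [Group N] [Group H] {φ : H →* MulAut N}

theorem index_ker_rightHom : (rightHom : N ⋊[φ] H →* H).ker.index = Nat.card H :=
  Nat.card_congr (QuotientGroup.quotientKerEquivOfSurjective _ rightHom_surjective).toEquiv

theorem lowerCentralSeries_ker_rightHom_eq_bot {n : ℕ}
    (h : (⊤ : Subgroup N).lowerCentralSeries n = ⊥) :
    (rightHom : N ⋊[φ] H →* H).ker.lowerCentralSeries n = ⊥ := by
  rw [← range_inl_eq_ker_rightHom, MonoidHom.range_eq_map, ← Subgroup.map_lowerCentralSeries, h,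
    Subgroup.map_bot]

theorem pow_eq_one_of_mem_ker_rightHom {n : ℕ} (h : ∀ a : N, a ^ n = 1)
    (g : (rightHom : N ⋊[φ] H →* H).ker) : g ^ n = 1 := by
  obtain ⟨a, ha⟩ : (g : N ⋊[φ] H) ∈ (inl : N →* N ⋊[φ] H).range := by
    rw [range_inl_eq_ker_rightHom]; exact g.2
  ext1
  rw [Subgroup.coe_pow, ← ha, ← map_pow, h, map_one, Subgroup.coe_one]

end SemidirectProduct

theorem commutatorElement_sq_commutatorElement_eq_one {W : Type*} [Group W] {M : Subgroup W}
    (hM : M.index = 2) (hM2 : M.lowerCentralSeries 2 = ⊥) (x y : W) :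
    ⁅⁅y ^ 2, x⁆, ⁅y, x⁆⁆ = 1 := by
  have hyx : ⁅y, x⁆ ∈ M := by
    simp only [commutatorElement_def, Subgroup.mul_mem_iff_of_index_two hM, inv_mem_iff]
    tauto
  have hy2 : y ^ 2 ∈ M := Subgroup.sq_mem_of_index_two hM y
  by_cases hy : y ∈ M
  · have hsplit : ⁅y ^ 2, x⁆ = ⁅y, ⁅y, x⁆⁆ * ⁅y, x⁆ * ⁅y, x⁆ := by
      simp only [commutatorElement_def, sq]; group
    have hcomm : Commute ⁅y, ⁅y, x⁆⁆ ⁅y, x⁆ := commutatorElement_eq_one_iff_commute.mp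
      (Subgroup.commutatorElement_commutatorElement_eq_one hM2 hy hyx hyx)
    rw [hsplit, commutatorElement_eq_one_iff_commute]
    exact (hcomm.mul_left (Commute.refl _)).mul_left (Commute.refl _)
  by_cases hx : x ∈ M
  · exact Subgroup.commutatorElement_commutatorElement_eq_one hM2 hy2 hx hyx
  · have hxy : x * y⁻¹ ∈ M := by
      rw [Subgroup.mul_mem_iff_of_index_two hM, inv_mem_iff]; tauto
    have hshift : ⁅y ^ 2, x⁆ = ⁅y ^ 2, x * y⁻¹⁆ := by
      simp only [commutatorElement_def]; group
    rw [hshift]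
    exact Subgroup.commutatorElement_commutatorElement_eq_one hM2 hy2 hxy hyx

def sqCommutatorWord : FreeGroup (Fin 2) :=
  let x := FreeGroup.of (0 : Fin 2)
  let y := FreeGroup.of (1 : Fin 2)
  ⁅⁅y ^ 2, x⁆, ⁅y, x⁆⁆

theorem map_sqCommutatorWord {G : Type*} [Group G] (φ : FreeGroup (Fin 2) →* G) :
    φ sqCommutatorWord =
      ⁅⁅φ (FreeGroup.of 1) ^ 2, φ (FreeGroup.of 0)⁆, ⁅φ (FreeGroup.of 1), φ (FreeGroup.of 0)⁆⁆ := by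
  simp only [sqCommutatorWord, map_commutatorElement, map_pow]

theorem isGroupLaw_sqCommutatorWord_of_index_eq_two {W : Type*} [Group W] {M : Subgroup W}
    (hM : M.index = 2) (hM2 : M.lowerCentralSeries 2 = ⊥) : IsGroupLaw W sqCommutatorWord :=
  fun φ => by
    rw [map_sqCommutatorWord]
    exact commutatorElement_sq_commutatorElement_eq_one hM hM2 _ _

theorem isGroupLaw_wreathProduct_sqCommutatorWord {A : Type*} [Group A]
    (hA : (⊤ : Subgroup A).lowerCentralSeries 2 = ⊥) :
    IsGroupLaw (WreathProduct A (Multiplicative (ZMod 2))) sqCommutatorWord :=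
  isGroupLaw_sqCommutatorWord_of_index_eq_two
    (SemidirectProduct.index_ker_rightHom.trans (Nat.card_zmod 2))
    (SemidirectProduct.lowerCentralSeries_ker_rightHom_eq_bot
      (Pi.top_lowerCentralSeries_two_eq_bot hA))

-- `⟨a, b, c⟩` is the unitriangular matrix `[[1, a, c], [0, 1, b], [0, 0, 1]]` over `ZMod 3`.
@[ext] structure Heis where
  a : ZMod 3
  b : ZMod 3
  c : ZMod 3

namespace Heis

instance : Mul Heis := ⟨fun p q => ⟨p.a + q.a, p.b + q.b, p.c + q.c + p.a * q.b⟩⟩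
instance : One Heis := ⟨⟨0, 0, 0⟩⟩
instance : Inv Heis := ⟨fun p => ⟨-p.a, -p.b, -p.c + p.a * p.b⟩⟩

@[simp] theorem mul_a (p q : Heis) : (p * q).a = p.a + q.a := rfl
@[simp] theorem mul_b (p q : Heis) : (p * q).b = p.b + q.b := rfl
@[simp] theorem mul_c (p q : Heis) : (p * q).c = p.c + q.c + p.a * q.b := rfl
@[simp] theorem one_a : (1 : Heis).a = 0 := rfl
@[simp] theorem one_b : (1 : Heis).b = 0 := rfl
@[simp] theorem one_c : (1 : Heis).c = 0 := rfl
@[simp] theorem inv_a (p : Heis) : p⁻¹.a = -p.a := rfl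
@[simp] theorem inv_b (p : Heis) : p⁻¹.b = -p.b := rfl
@[simp] theorem inv_c (p : Heis) : p⁻¹.c = -p.c + p.a * p.b := rfl

instance : Group Heis where
  mul_assoc p q r := by ext <;> simp only [mul_a, mul_b, mul_c] <;> ring
  one_mul p := by ext <;> simp
  mul_one p := by ext <;> simp
  inv_mul_cancel p := by ext <;> simp

theorem pow_three_eq_one (p : Heis) : p ^ 3 = 1 := by
  ext <;> simp only [pow_succ, pow_zero, one_mul, mul_a, mul_b, mul_c, one_a, one_b, one_c] <;>
    ring_nf <;> reduce_mod_char

theorem top_lowerCentralSeries_two_eq_bot : (⊤ : Subgroup Heis).lowerCentralSeries 2 = ⊥ :=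
  Subgroup.top_lowerCentralSeries_two_eq_bot_iff.mpr fun p q r => by
    ext <;> simp only [commutatorElement_def, mul_a, mul_b, mul_c, inv_a, inv_b, inv_c, one_a,
      one_b, one_c] <;> ring

end Heis

abbrev HeisWreathKlein : Type :=
  WreathProduct Heis (Multiplicative (ZMod 2) × Multiplicative (ZMod 2))

theorem not_isGroupLaw_sqCommutatorWord : ¬ IsGroupLaw HeisWreathKlein sqCommutatorWord := by
  intro h
  let x : HeisWreathKlein := ⟨Pi.mulSingle 1 ⟨1, 0, 0⟩, (Multiplicative.ofAdd 1, 1)⟩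
  let y : HeisWreathKlein := ⟨Pi.mulSingle 1 ⟨0, 1, 0⟩, (1, Multiplicative.ofAdd 1)⟩
  have hw := h (FreeGroup.lift ![x, y])
  rw [map_sqCommutatorWord, FreeGroup.lift_apply_of, FreeGroup.lift_apply_of] at hw
  exact absurd (congrArg (fun g => (g.left 1).c) hw) (by decide)

theorem free_nilpotent_23_wreath_C2_not_generating :
    ∃ (G : Type) (hG : Group G), letI := hG;
      (∃ (N : Subgroup G) (hN : N.Normal),
        (Subgroup.lowerCentralSeries (⊤ : Subgroup N) 2 = ⊥ ∧ ∀ g : N, g ^ 3 = 1) ∧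
        (letI := hN;
          (∀ x y : G ⧸ N, x * y = y * x) ∧ ∀ g : G ⧸ N, g ^ 2 = 1)) ∧
      ∃ (k : ℕ) (w : FreeGroup (Fin k)),
        IsGroupLaw (WreathProduct
          (FreeGroup (Fin 2) ⧸ Subgroup.normalClosure
            ((Subgroup.lowerCentralSeries (⊤ : Subgroup (FreeGroup (Fin 2))) 2 : Set (FreeGroup (Fin 2))) ∪
              Set.range (fun x : FreeGroup (Fin 2) => x ^ 3)))
          (Multiplicative (ZMod 2))) w ∧
        ¬ IsGroupLaw G w := by
  let e := QuotientGroup.quotientKerEquivOfSurjective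
    (SemidirectProduct.rightHom : HeisWreathKlein →* _) SemidirectProduct.rightHom_surjective
  refine ⟨HeisWreathKlein, inferInstance,
    ⟨SemidirectProduct.rightHom.ker, inferInstance, ⟨?_, ?_⟩, ?_, ?_⟩, 2, sqCommutatorWord,
    isGroupLaw_wreathProduct_sqCommutatorWord ?_, not_isGroupLaw_sqCommutatorWord⟩
  · exact Subgroup.top_lowerCentralSeries_eq_bot_iff.mpr
      (SemidirectProduct.lowerCentralSeries_ker_rightHom_eq_bot
        (Pi.top_lowerCentralSeries_two_eq_bot Heis.top_lowerCentralSeries_two_eq_bot))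
  · exact SemidirectProduct.pow_eq_one_of_mem_ker_rightHom fun (f : _ → Heis) =>
      funext fun z => (f z).pow_three_eq_one
  · exact fun x y => e.injective (by rw [map_mul, map_mul, mul_comm])
  · have hK : ∀ u : Multiplicative (ZMod 2) × Multiplicative (ZMod 2), u ^ 2 = 1 := by decide
    exact fun g => e.injective (by rw [map_pow, map_one, hK])
  · exact QuotientGroup.top_lowerCentralSeries_eq_bot_iff.mpr fun _ hg =>
      Subgroup.subset_normalClosure (Set.mem_union_left _ hg)
end

section
/- Let n be an odd integer with n ≥ 3 and let D_4 be the dihedral group of order 8 (DihedralGroup 4). Then var(D_4 ≀ C_n) is strictly contained in var(D_4)·𝔄_n: there exists a group G having a normal subgroup N with N ∈ var(D_4) and G/N abelian of exponent dividing n, such that some law of D_4 ≀ C_n is not a law of G. -/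
namespace DW
abbrev D4 := DihedralGroup 4

def kk (a b : D4) : ZMod 2 := if a * b = b * a then 0 else 1

def hD : Multiplicative (ZMod 2) →* D4 where
  toFun z := DihedralGroup.r (2 * (Multiplicative.toAdd z).val)
  map_one' := by decide
  map_mul' := by decide

lemma D4_main : ∀ a b g h : D4,
    (g⁻¹*(a*g))⁻¹ * ((h⁻¹*(b*h))⁻¹ * ((g⁻¹*(a*g)) * (h⁻¹*(b*h)))) =
      hD (Multiplicative.ofAdd (kk a b)) := by
  decide

-- word pieces
def sT (n : ℕ) (T : Finset ℕ) : ℕ := T.sum fun p => n / p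
def eT (n : ℕ) (T : Finset ℕ) (y : ℕ) : ℕ := (sT n T + (n - y)) % n
abbrev idxS (n : ℕ) : Finset (Finset ℕ × ℕ) := n.primeFactors.powerset ×ˢ Finset.range n

def cw : FreeGroup (Fin 4) := (.of 0)⁻¹ * ((.of 1)⁻¹ * ((.of 0) * (.of 1)))
def factorw (n : ℕ) (Ty : Finset ℕ × ℕ) : FreeGroup (Fin 4) :=
  let g₁ : FreeGroup (Fin 4) := (.of 3) ^ Ty.2
  let g₂ : FreeGroup (Fin 4) := (.of 2) * (.of 3) ^ (eT n Ty.1 Ty.2)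
  let c₁ := g₁⁻¹ * cw * g₁
  let c₂ := g₂⁻¹ * cw * g₂
  c₁⁻¹ * (c₂⁻¹ * (c₁ * c₂))
noncomputable def word (n : ℕ) : FreeGroup (Fin 4) := ((idxS n).toList.map (factorw n)).prod

variable {B : Type} [CommGroup B]

open SemidirectProduct

-- conjugation of inl by arbitrary element
lemma conj_inl (u : B → D4) (γ : WreathProduct D4 B) :
    γ⁻¹ * inl u * γ =
      inl (fun x => (γ.left (γ.right * x))⁻¹ * (u (γ.right * x) * γ.left (γ.right * x))) := by
  refine SemidirectProduct.ext ?_ (by simp)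
  simp only [mul_left, inv_left, left_inl, mul_right, inv_right, right_inl, map_mul, map_inv]
  funext x
  simp [MulAut.inv_def, wreathShift, mul_assoc]

lemma comm_right_one (φ : FreeGroup (Fin 4) →* WreathProduct D4 B) : (φ cw).right = 1 := by
  have : (φ cw).right = rightHom (φ cw) := rfl
  rw [this]
  simp only [cw, map_mul, map_inv]
  generalize rightHom (φ (FreeGroup.of 0)) = a
  generalize rightHom (φ (FreeGroup.of 1)) = b
  rw [mul_comm a b]
  group

lemma right_eq_one_eq_inl {a : WreathProduct D4 B} (h : a.right = 1) : a = inl a.left := by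
  refine SemidirectProduct.ext rfl ?_
  simp [h]

lemma eval_factor (n : ℕ) (φ : FreeGroup (Fin 4) →* WreathProduct D4 B) (Ty : Finset ℕ × ℕ) :
    φ (factorw n Ty) = inl (fun x =>
      hD (Multiplicative.ofAdd
        (kk ((φ cw).left ((φ (.of 3)).right ^ Ty.2 * x))
            ((φ cw).left ((φ (.of 2)).right * (φ (.of 3)).right ^ (eT n Ty.1 Ty.2) * x))))) := by
  have hc : φ cw = inl ((φ cw).left) := right_eq_one_eq_inl (comm_right_one φ)
  set γ₁ := φ ((FreeGroup.of 3 : FreeGroup (Fin 4)) ^ Ty.2) with hγ₁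
  set γ₂ := φ ((FreeGroup.of 2 : FreeGroup (Fin 4)) * (FreeGroup.of 3) ^ (eT n Ty.1 Ty.2)) with hγ₂
  have h1 : φ (factorw n Ty) =
      (γ₁⁻¹ * inl ((φ cw).left) * γ₁)⁻¹ *
        ((γ₂⁻¹ * inl ((φ cw).left) * γ₂)⁻¹ *
          ((γ₁⁻¹ * inl ((φ cw).left) * γ₁) * (γ₂⁻¹ * inl ((φ cw).left) * γ₂))) := by
    simp only [factorw, map_mul, map_inv, hγ₁, hγ₂, ← hc]
  rw [h1, conj_inl, conj_inl, ← map_inv, ← map_inv, ← map_mul, ← map_mul, ← map_mul]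
  congr 1
  funext x
  simp only [Pi.mul_apply, Pi.inv_apply]
  have hr1 : γ₁.right = (φ (.of 3)).right ^ Ty.2 := by
    rw [hγ₁, map_pow]
    exact map_pow SemidirectProduct.rightHom _ _
  have hr2 : γ₂.right = (φ (.of 2)).right * (φ (.of 3)).right ^ (eT n Ty.1 Ty.2) := by
    rw [hγ₂, map_mul, map_pow, SemidirectProduct.mul_right]
    exact congrArg _ (map_pow SemidirectProduct.rightHom _ _)
  rw [hr1, hr2]
  exact D4_main _ _ _ _

lemma ofAdd_list_sum {α : Type*} (k : α → ZMod 2) (l : List α) :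
    (l.map fun a => Multiplicative.ofAdd (k a)).prod = Multiplicative.ofAdd ((l.map k).sum) := by
  induction l with
  | nil => simp
  | cons a l ih => simp only [List.map_cons, List.prod_cons, List.sum_cons, ih, ofAdd_add]

lemma eval_word (n : ℕ) (φ : FreeGroup (Fin 4) →* WreathProduct D4 B) :
    φ (word n) = inl (fun x =>
      hD (Multiplicative.ofAdd (∑ Ty ∈ idxS n,
        kk ((φ cw).left ((φ (.of 3)).right ^ Ty.2 * x))
           ((φ cw).left ((φ (.of 2)).right * (φ (.of 3)).right ^ (eT n Ty.1 Ty.2) * x))))) := by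
  classical
  set K : (Finset ℕ × ℕ) → B → ZMod 2 := fun Ty x =>
        kk ((φ cw).left ((φ (.of 3)).right ^ Ty.2 * x))
           ((φ cw).left ((φ (.of 2)).right * (φ (.of 3)).right ^ (eT n Ty.1 Ty.2) * x)) with hK
  set F : (Finset ℕ × ℕ) → (B → D4) := fun Ty x => hD (Multiplicative.ofAdd (K Ty x)) with hF
  have step1 : φ (word n) = ((idxS n).toList.map (fun Ty => inl (F Ty))).prod := by
    rw [word, map_list_prod, List.map_map]
    refine congrArg _ (List.map_congr_left (fun Ty _ => ?_))
    exact eval_factor n φ Ty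
  rw [step1]
  have step2 : ((idxS n).toList.map (fun Ty => inl (F Ty))).prod
      = (inl (((idxS n).toList.map F).prod) : WreathProduct D4 B) := by
    rw [map_list_prod, List.map_map]; rfl
  rw [step2]
  congr 1
  funext x
  rw [Pi.list_prod_apply, List.map_map]
  have h3 : ((fun f : B → D4 => f x) ∘ F) = fun Ty => hD (Multiplicative.ofAdd (K Ty x)) := rfl
  rw [h3]
  have h4 : ((idxS n).toList.map fun Ty => hD (Multiplicative.ofAdd (K Ty x))).prod
      = hD (((idxS n).toList.map fun Ty => Multiplicative.ofAdd (K Ty x)).prod) := by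
    rw [map_list_prod, List.map_map]; rfl
  rw [h4, ofAdd_list_sum]
  congr 1
  rw [Finset.sum_map_toList]

lemma zmod2_add_self (a : ZMod 2) : a + a = 0 := CharTwo.add_self_eq_zero a

lemma kk_symm (a b : D4) : kk a b = kk b a := by
  unfold kk
  by_cases h : a * b = b * a
  · rw [if_pos h, if_pos h.symm]
  · rw [if_neg h, if_neg (fun hh => h hh.symm)]

lemma kk_self {a b : D4} (h : a = b) : kk a b = 0 := by subst h; simp [kk]

lemma kk_one_left (b : D4) : kk 1 b = 0 := by simp [kk]
lemma kk_one_right (a : D4) : kk a 1 = 0 := by simp [kk]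

lemma cast_eT {n : ℕ} (hn : 0 < n) (T : Finset ℕ) (y : ℕ) (hy : y < n) :
    ((eT n T y : ℕ) : ZMod n) = (sT n T : ZMod n) - (y : ℕ) := by
  have : ((eT n T y : ℕ) : ZMod n) = ((sT n T + (n - y) : ℕ) : ZMod n) := by
    rw [eT, ZMod.natCast_mod]
  rw [this, Nat.cast_add, Nat.cast_sub hy.le, ZMod.natCast_self]
  ring

lemma law_W (n : ℕ) (hn : 3 ≤ n) (φ : FreeGroup (Fin 4) →* WreathProduct D4 (Multiplicative (ZMod n))) :
    φ (word n) = 1 := by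
  haveI : NeZero n := ⟨by omega⟩
  have hn0 : 0 < n := by omega
  rw [eval_word]
  set ct := (φ cw).left with hct
  set b₁ := (φ (.of 2)).right with hb₁
  set b₂ := (φ (.of 3)).right with hb₂
  set β₁ := Multiplicative.toAdd b₁ with hβ₁
  set β₂ := Multiplicative.toAdd b₂ with hβ₂
  have hpow : ∀ e : ℕ, b₂ ^ e = Multiplicative.ofAdd ((e : ZMod n) * β₂) := by
    intro e
    apply Multiplicative.toAdd.injective
    simp [toAdd_pow, nsmul_eq_mul, hβ₂]
  have key : ∀ x : Multiplicative (ZMod n),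
      (∑ Ty ∈ idxS n, kk (ct (b₂ ^ Ty.2 * x)) (ct (b₁ * b₂ ^ (eT n Ty.1 Ty.2) * x))) = 0 := by
    intro x
    by_cases hu : IsUnit β₂
    · -- reflection involution
      obtain ⟨u, hu⟩ := hu
      set ρ : Finset ℕ × ℕ → Finset ℕ × ℕ := fun Ty =>
        (Ty.1, ((↑u⁻¹ * β₁ + (sT n Ty.1 : ZMod n) - ((Ty.2 : ℕ) : ZMod n)).val)) with hρ
      have hval : ∀ Ty : Finset ℕ × ℕ,
          (((ρ Ty).2 : ℕ) : ZMod n) = ↑u⁻¹ * β₁ + (sT n Ty.1 : ZMod n) - ((Ty.2 : ℕ) : ZMod n) := by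
        intro Ty
        exact ZMod.natCast_rightInverse _
      have hyrange : ∀ Ty : Finset ℕ × ℕ, (ρ Ty).2 < n := fun Ty => ZMod.val_lt _
      -- position swap
      have hswap : ∀ Ty : Finset ℕ × ℕ, Ty ∈ idxS n →
          b₂ ^ (ρ Ty).2 = b₁ * b₂ ^ (eT n Ty.1 Ty.2) ∧
          b₁ * b₂ ^ (eT n (ρ Ty).1 (ρ Ty).2) = b₂ ^ Ty.2 := by
        intro Ty hTy
        have hy : Ty.2 < n := by
          have := (Finset.mem_product.mp hTy).2
          simpa using this
        have huu : (↑u⁻¹ : ZMod n) * ↑u = 1 := u.inv_mul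
        constructor
        · apply Multiplicative.toAdd.injective
          rw [hpow, hpow, toAdd_mul, toAdd_ofAdd, toAdd_ofAdd, hval,
            cast_eT hn0 _ _ hy, ← hβ₁, ← hu]
          have expand : ∀ a c d : ZMod n, (↑u⁻¹ * a + c - d) * ↑u
              = a * (↑u⁻¹ * ↑u) + (c - d) * ↑u := by intro a c d; ring
          rw [expand, huu]; ring
        · apply Multiplicative.toAdd.injective
          rw [hpow, hpow, toAdd_mul, toAdd_ofAdd, toAdd_ofAdd,
            cast_eT hn0 _ _ (hyrange Ty), hval, ← hβ₁, ← hu]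
          have expand : ∀ a c d : ZMod n, (c - (↑u⁻¹ * a + c - d)) * ↑u
              = d * ↑u - a * (↑u⁻¹ * ↑u) := by intro a c d; ring
          show β₁ + (sT n Ty.1 - (↑u⁻¹ * β₁ + ↑(sT n Ty.1) - ↑Ty.2)) * ↑u = (↑Ty.2 : ZMod n) * ↑u
          rw [expand, huu]; ring
      refine Finset.sum_involution (fun Ty _ => ρ Ty) ?_ ?_ ?_ ?_
      · intro Ty hTy
        rw [(hswap Ty hTy).1, (hswap Ty hTy).2]
        rw [kk_symm]
        exact zmod2_add_self _
      · intro Ty hTy hf hfix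
        apply hf
        have : b₂ ^ Ty.2 = b₁ * b₂ ^ (eT n Ty.1 Ty.2) := by
          conv_lhs => rw [← hfix]
          exact (hswap Ty hTy).1
        exact kk_self (by rw [this])
      · intro Ty hTy
        rw [Finset.mem_product] at hTy ⊢
        exact ⟨hTy.1, Finset.mem_range.mpr (hyrange Ty)⟩
      · intro Ty hTy
        have h2 : (ρ (ρ Ty)).2 = Ty.2 := by
          have hy : Ty.2 < n := by
            have := (Finset.mem_product.mp hTy).2
            simpa using this
          have : (((ρ (ρ Ty)).2 : ℕ) : ZMod n) = ((Ty.2 : ℕ) : ZMod n) := by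
            rw [hval]
            show ↑u⁻¹ * β₁ + (sT n Ty.1 : ZMod n) - (((ρ Ty).2 : ℕ) : ZMod n) = _
            rw [hval]
            ring
          have := congrArg ZMod.val this
          rwa [ZMod.val_natCast_of_lt (hyrange (ρ Ty)), ZMod.val_natCast_of_lt hy] at this
        show (Ty.1, (ρ (ρ Ty)).2) = Ty
        rw [h2]
    · -- symmDiff involution
      have hβval : ((β₂.val : ℕ) : ZMod n) = β₂ := ZMod.natCast_rightInverse _
      have hd : Nat.gcd β₂.val n ≠ 1 := by
        intro h
        apply hu
        rw [← hβval]
        exact (ZMod.isUnit_iff_coprime _ _).mpr h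
      set q := (Nat.gcd β₂.val n).minFac with hq
      have hqp : q.Prime := Nat.minFac_prime hd
      have hqn : q ∣ n := (Nat.minFac_dvd _).trans (Nat.gcd_dvd_right _ _)
      have hqb : q ∣ β₂.val := (Nat.minFac_dvd _).trans (Nat.gcd_dvd_left _ _)
      have hkill : ((n / q : ℕ) : ZMod n) * β₂ = 0 := by
        rw [← hβval, ← Nat.cast_mul, ZMod.natCast_eq_zero_iff]
        obtain ⟨t, ht⟩ := hqb
        rw [ht, ← mul_assoc, Nat.div_mul_cancel hqn]
        exact Dvd.intro t rfl
      have hsame : ∀ T : Finset ℕ, ∀ y : ℕ, y < n →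
          b₂ ^ (eT n (symmDiff T {q}) y) = b₂ ^ (eT n T y) := by
        intro T y hy
        rw [hpow, hpow]
        congr 1
        rw [cast_eT hn0 _ _ hy, cast_eT hn0 _ _ hy, sub_mul, sub_mul]
        have hs : ((sT n (symmDiff T {q}) : ℕ) : ZMod n) * β₂
            = ((sT n T : ℕ) : ZMod n) * β₂ := by
          by_cases hqT : q ∈ T
          · have hT' : symmDiff T {q} = T.erase q := by
              ext p
              simp only [Finset.mem_symmDiff, Finset.mem_erase, Finset.mem_singleton]
              constructor
              · rintro (⟨hp, hpq⟩ | ⟨rfl, hp⟩)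
                · exact ⟨hpq, hp⟩
                · exact absurd hqT hp
              · rintro ⟨hpq, hp⟩
                exact Or.inl ⟨hp, hpq⟩
            have hsum : (sT n T : ℕ) = n / q + sT n (T.erase q) := by
              rw [sT, ← Finset.add_sum_erase _ _ hqT]; rfl
            rw [hT', hsum, Nat.cast_add, add_mul, hkill, zero_add]
          · have hT' : symmDiff T {q} = insert q T := by
              ext p
              simp only [Finset.mem_symmDiff, Finset.mem_insert, Finset.mem_singleton]
              constructor
              · rintro (⟨hp, hpq⟩ | ⟨rfl, hp⟩)
                · exact Or.inr hp
                · exact Or.inl rfl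
              · rintro (rfl | hp)
                · exact Or.inr ⟨rfl, hqT⟩
                · exact Or.inl ⟨hp, fun h => hqT (h ▸ hp)⟩
            have hsum : (sT n (symmDiff T {q}) : ℕ) = n / q + sT n T := by
              rw [hT', sT, Finset.sum_insert hqT]; rfl
            rw [hsum, Nat.cast_add, add_mul, hkill, zero_add]
        rw [hs]
      refine Finset.sum_involution (fun Ty _ => (symmDiff Ty.1 {q}, Ty.2)) ?_ ?_ ?_ ?_
      · intro Ty hTy
        have hy : Ty.2 < n := by
          have := (Finset.mem_product.mp hTy).2
          simpa using this
        show kk _ _ + kk (ct (b₂ ^ Ty.2 * x)) (ct (b₁ * b₂ ^ (eT n (symmDiff Ty.1 {q}) Ty.2) * x)) = 0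
        rw [hsame Ty.1 Ty.2 hy]
        exact zmod2_add_self _
      · intro Ty hTy hf
        intro hfix
        have h1 : symmDiff Ty.1 {q} = Ty.1 := congrArg Prod.fst hfix
        have : q ∈ symmDiff Ty.1 {q} ↔ q ∈ Ty.1 := by rw [h1]
        simp [Finset.mem_symmDiff] at this
      · intro Ty hTy
        rw [Finset.mem_product] at hTy ⊢
        refine ⟨Finset.mem_powerset.mpr ?_, hTy.2⟩
        have hT : Ty.1 ⊆ n.primeFactors := Finset.mem_powerset.mp hTy.1
        refine le_trans symmDiff_le_sup (sup_le hT ?_)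
        simp only [Finset.le_iff_subset, Finset.singleton_subset_iff, Nat.mem_primeFactors]
        exact ⟨hqp, hqn, by omega⟩
      · intro Ty hTy
        show (symmDiff (symmDiff Ty.1 {q}) {q}, Ty.2) = Ty
        rw [symmDiff_symmDiff_cancel_right]
  have : (fun x => hD (Multiplicative.ofAdd (∑ Ty ∈ idxS n,
      kk (ct (b₂ ^ Ty.2 * x)) (ct (b₁ * b₂ ^ (eT n Ty.1 Ty.2) * x))))) = (1 : Multiplicative (ZMod n) → D4) := by
    funext x
    rw [key x]
    rfl
  rw [this, map_one]

lemma sT_not_dvd (n : ℕ) (hn : 3 ≤ n) (T : Finset ℕ) (hT : T ⊆ n.primeFactors)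
    (hne : T.Nonempty) : ¬ (n ∣ sT n T) := by
  obtain ⟨q, hq⟩ := hne
  have hqpf := hT hq
  rw [Nat.mem_primeFactors] at hqpf
  obtain ⟨hqp, hqn, -⟩ := hqpf
  set k := n.factorization q with hk
  have hn0 : n ≠ 0 := by omega
  have hk1 : 1 ≤ k := hqp.factorization_pos_of_dvd hn0 hqn
  have hdiv : ∀ p ∈ T.erase q, q ^ k ∣ n / p := by
    intro p hp
    have hpq := (Finset.mem_erase.mp hp).1
    have hppf := hT (Finset.mem_erase.mp hp).2
    rw [Nat.mem_primeFactors] at hppf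
    obtain ⟨hpp, hpn, -⟩ := hppf
    have hnp0 : n / p ≠ 0 := by
      have := Nat.div_pos (Nat.le_of_dvd (by omega) hpn) hpp.pos
      omega
    rw [hqp.pow_dvd_iff_le_factorization hnp0, Nat.factorization_div hpn]
    simp only [Finsupp.coe_tsub, Pi.sub_apply, hpp.factorization, Finsupp.single_apply,
      if_neg hpq]
    omega
  have hnq0 : n / q ≠ 0 := by
    have := Nat.div_pos (Nat.le_of_dvd (by omega) hqn) hqp.pos
    omega
  have hnq : ¬ q ^ k ∣ n / q := by
    rw [hqp.pow_dvd_iff_le_factorization hnq0, Nat.factorization_div hqn]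
    simp only [Finsupp.coe_tsub, Pi.sub_apply, hqp.factorization, Finsupp.single_apply,
      eq_self_iff_true, if_true]
    omega
  intro hdvd
  apply hnq
  have h1 : q ^ k ∣ sT n T := dvd_trans (by rw [hk]; exact Nat.ordProj_dvd n q) hdvd
  have h2 : q ^ k ∣ ∑ p ∈ T.erase q, n / p := Finset.dvd_sum hdiv
  have h3 : sT n T = n / q + ∑ p ∈ T.erase q, n / p := by
    rw [sT, ← Finset.add_sum_erase _ _ hq]
  have h4 := Nat.dvd_sub h1 h2
  rwa [h3, Nat.add_sub_cancel] at h4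

def mu (n : ℕ) (v : ZMod n) : ZMod 2 :=
  ∑ T ∈ n.primeFactors.powerset, if ((sT n T : ℕ) : ZMod n) = v then 1 else 0

lemma exists_mm (n : ℕ) (hn : 3 ≤ n) (hodd : Odd n) :
    ∃ m : ZMod n, mu n m + mu n (m - 2) = 1 := by
  haveI : NeZero n := ⟨by omega⟩
  by_contra hcon
  push_neg at hcon
  have hz2 : ∀ a b : ZMod 2, a + b ≠ 1 → a = b := by decide
  have hstep : ∀ m : ZMod n, mu n m = mu n (m - 2) := fun m => hz2 _ _ (hcon m)
  have hmu0 : mu n 0 = 1 := by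
    rw [mu, Finset.sum_eq_single ∅]
    · simp [sT]
    · intro T hTw hTne
      rw [if_neg]
      intro hcast
      rw [ZMod.natCast_eq_zero_iff] at hcast
      exact sT_not_dvd n hn T (Finset.mem_powerset.mp hTw)
        (Finset.nonempty_iff_ne_empty.mpr hTne) hcast
    · intro h
      exact absurd (Finset.empty_mem_powerset _) h
  have hall : ∀ j : ℕ, mu n (2 * (j : ZMod n)) = 1 := by
    intro j
    induction j with
    | zero => simpa using hmu0
    | succ j ih =>
      have : (2 : ZMod n) * ((j+1 : ℕ) : ZMod n) - 2 = 2 * (j : ZMod n) := by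
        push_cast; ring
      rw [hstep, this]
      exact ih
  have h2unit : IsUnit (2 : ZMod n) := by
    have hc : Nat.Coprime 2 n := Nat.coprime_two_left.mpr hodd
    have := (ZMod.isUnit_iff_coprime 2 n).mpr hc
    simpa using this
  obtain ⟨u, hu⟩ := h2unit
  have hmuall : ∀ m : ZMod n, mu n m = 1 := by
    intro m
    have h2t : 2 * (((↑u⁻¹ * m : ZMod n).val : ℕ) : ZMod n) = m := by
      rw [ZMod.natCast_rightInverse _, ← hu, ← mul_assoc, u.mul_inv, one_mul]
    rw [← h2t]
    exact hall _
  have hsum1 : ∑ m : ZMod n, mu n m = 1 := by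
    have : ∑ m : ZMod n, mu n m = ∑ _m : ZMod n, (1 : ZMod 2) := by
      exact Finset.sum_congr rfl (fun m _ => hmuall m)
    rw [this, Finset.sum_const, Finset.card_univ, ZMod.card, nsmul_eq_mul, mul_one]
    obtain ⟨c, hc⟩ := hodd
    rw [hc]
    push_cast
    ring_nf
    rw [show ((2:ZMod 2) = 0) from rfl]
    ring
  have hsum0 : ∑ m : ZMod n, mu n m = 0 := by
    rw [show (∑ m : ZMod n, mu n m)
        = ∑ T ∈ n.primeFactors.powerset, ∑ m : ZMod n,
            (if ((sT n T : ℕ) : ZMod n) = m then (1 : ZMod 2) else 0) from Finset.sum_comm]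
    have hinner : ∀ T : Finset ℕ, (∑ m : ZMod n,
        (if ((sT n T : ℕ) : ZMod n) = m then (1 : ZMod 2) else 0)) = 1 := by
      intro T
      rw [Finset.sum_ite_eq]
      simp
    rw [Finset.sum_congr rfl (fun T _ => hinner T), Finset.sum_const, Finset.card_powerset,
      nsmul_eq_mul, mul_one]
    have hpos : 0 < n.primeFactors.card := by
      rw [Finset.card_pos]
      obtain ⟨p, hp, hpd⟩ := Nat.exists_prime_and_dvd (show n ≠ 1 by omega)
      exact ⟨p, Nat.mem_primeFactors.mpr ⟨hp, hpd, by omega⟩⟩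
    rw [Nat.cast_pow]
    rw [show ((2:ℕ) : ZMod 2) = 0 from rfl]
    exact zero_pow (by omega)
  rw [hsum1] at hsum0
  exact absurd hsum0 (by decide)

section Gside

variable (n : ℕ)

abbrev Bg (n : ℕ) := Multiplicative (ZMod n × ZMod n)

def AAf (n : ℕ) (η : ZMod n) : D4 := if η = 0 then .r 3 else if η = -1 then .r 1 else 1
def BBf (n : ℕ) (mm ζ : ZMod n) : D4 := if ζ = mm ∨ ζ = mm - 1 then .sr 0 else 1

lemma inner_val (n : ℕ) (hn : 3 ≤ n) (hodd : Odd n) (mm s : ZMod n) :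
    kk (.r 3) (BBf n mm s) + kk (.r 1) (BBf n mm (s + 1))
      = (if s = mm then 1 else 0) + (if s = mm - 2 then 1 else 0) := by
  haveI : NeZero n := ⟨by omega⟩
  haveI : Fact (1 < n) := ⟨by omega⟩
  have h10 : (1 : ZMod n) ≠ 0 := one_ne_zero
  have h20 : (2 : ZMod n) ≠ 0 := by
    intro h
    have : (n : ℕ) ∣ 2 := by
      have := (ZMod.natCast_eq_zero_iff 2 n).mp (by exact_mod_cast h)
      exact this
    have := Nat.le_of_dvd (by norm_num) this
    omega
  have e1 : s + 1 = mm ↔ s = mm - 1 := (eq_sub_iff_add_eq).symm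
  have e2 : s + 1 = mm - 1 ↔ s = mm - 2 := by
    rw [← eq_sub_iff_add_eq, sub_sub, one_add_one_eq_two]
  by_cases h1 : s = mm
  · have h2 : s ≠ mm - 1 := by
      rw [h1]; intro h; exact h10 (sub_eq_self.mp h.symm)
    have h3 : s ≠ mm - 2 := by
      rw [h1]; intro h; exact h20 (sub_eq_self.mp h.symm)
    rw [BBf, if_pos (Or.inl h1), BBf, if_neg, if_pos h1, if_neg h3]
    · decide
    · rw [e1, e2]
      rintro (h | h)
      · exact h2 h
      · exact h3 h
  · by_cases h2 : s = mm - 1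
    · have h3 : s ≠ mm - 2 := by
        rw [h2]; intro h
        apply h10
        have := sub_right_inj.mp h
        linear_combination -this
      rw [BBf, if_pos (Or.inr h2), BBf, if_pos (Or.inl (e1.mpr h2)), if_neg h1, if_neg h3]
      decide
    · by_cases h3 : s = mm - 2
      · rw [BBf, if_neg (by rintro (h | h); exact h1 h; exact h2 h),
          BBf, if_pos (Or.inr (e2.mpr h3)), if_neg h1, if_pos h3]
        decide
      · rw [BBf, if_neg (by rintro (h | h); exact h1 h; exact h2 h),
          BBf, if_neg (by rw [e1, e2]; rintro (h | h); exact h2 h; exact h3 h),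
          if_neg h1, if_neg h3]
        decide

lemma not_law_G (hn : 3 ≤ n) (hodd : Odd n) :
    ∃ φ : FreeGroup (Fin 4) →* WreathProduct D4 (Bg n), φ (word n) ≠ 1 := by
  haveI : NeZero n := ⟨by omega⟩
  haveI : Fact (1 < n) := ⟨by omega⟩
  have hn0 : 0 < n := by omega
  obtain ⟨mm, hmm⟩ := exists_mm n hn hodd
  set f : (Bg n → D4) := fun z =>
    if Multiplicative.toAdd z = ((0 : ZMod n), (0 : ZMod n)) then DihedralGroup.r 1
    else if Multiplicative.toAdd z = ((1 : ZMod n), mm) then DihedralGroup.sr 0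
    else 1 with hf
  set β : Bg n := Multiplicative.ofAdd ((0 : ZMod n), (1 : ZMod n)) with hβ
  set b1g : Bg n := Multiplicative.ofAdd ((1 : ZMod n), (0 : ZMod n)) with hb1g
  set v : Fin 4 → WreathProduct D4 (Bg n) :=
    ![SemidirectProduct.inl f, SemidirectProduct.inr β,
      SemidirectProduct.inr b1g, SemidirectProduct.inr β] with hv
  refine ⟨FreeGroup.lift v, ?_⟩
  set φ := FreeGroup.lift v with hφ
  rw [eval_word]
  -- identify projections
  have hb₁ : (φ (.of 2)).right = b1g := by rw [hφ, FreeGroup.lift_apply_of]; simp [hv]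
  have hb₂ : (φ (.of 3)).right = β := by rw [hφ, FreeGroup.lift_apply_of]; simp [hv]
  -- identify ct
  have hct : (φ cw).left = fun z => (f z)⁻¹ * f (β * z) := by
    have h0 : φ (.of 0) = SemidirectProduct.inl f := by rw [hφ, FreeGroup.lift_apply_of]; simp [hv]
    have h1 : φ (.of 1) = SemidirectProduct.inr β := by rw [hφ, FreeGroup.lift_apply_of]; simp [hv]
    have hcw : φ cw = (SemidirectProduct.inl f)⁻¹ *
        ((SemidirectProduct.inr β)⁻¹ * (SemidirectProduct.inl f * SemidirectProduct.inr β)) := by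
      rw [cw]
      simp only [map_mul, map_inv, h0, h1]
    rw [hcw]
    have hconj : (SemidirectProduct.inr β : WreathProduct D4 (Bg n))⁻¹ *
          (SemidirectProduct.inl f * SemidirectProduct.inr β)
        = SemidirectProduct.inl (fun z => f (β * z)) := by
      rw [← mul_assoc, conj_inl]
      simp
    rw [hconj, ← map_inv, ← map_mul]
    rfl
  -- position computations
  have hβpow : ∀ y : ℕ, β ^ y = Multiplicative.ofAdd ((0 : ZMod n), (y : ZMod n)) := by
    intro y
    apply Multiplicative.toAdd.injective
    rw [toAdd_pow]
    show y • ((0 : ZMod n), (1 : ZMod n)) = ((0 : ZMod n), (y : ZMod n))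
    have : y • ((0 : ZMod n), (1 : ZMod n)) = (y • (0 : ZMod n), y • (1 : ZMod n)) := rfl
    rw [this, smul_zero, nsmul_eq_mul, mul_one]
  have hb1pow : ∀ e : ℕ, b1g * β ^ e = Multiplicative.ofAdd ((1 : ZMod n), (e : ZMod n)) := by
    intro e
    apply Multiplicative.toAdd.injective
    rw [toAdd_mul, hβpow]
    show ((1 : ZMod n), (0 : ZMod n)) + ((0 : ZMod n), (e : ZMod n)) = _
    rw [Prod.mk_add_mk, add_zero, zero_add, toAdd_ofAdd]
  -- values of ct
  have h_ne01 : (0 : ZMod n) ≠ 1 := by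
    intro h; exact one_ne_zero (α := ZMod n) h.symm
  have h_ne10 : (1 : ZMod n) ≠ 0 := one_ne_zero
  have hf00 : f (Multiplicative.ofAdd ((0 : ZMod n), (0 : ZMod n))) = DihedralGroup.r 1 := by
    rw [hf]
    simp
  have hf1mm : f (Multiplicative.ofAdd ((1 : ZMod n), mm)) = DihedralGroup.sr 0 := by
    rw [hf]
    simp only [toAdd_ofAdd, Prod.mk.injEq]
    rw [if_neg (fun h => h_ne10 h.1), if_pos trivial]
  have hfA' : ∀ η : ZMod n, η ≠ 0 → f (Multiplicative.ofAdd ((0 : ZMod n), η)) = 1 := by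
    intro η hη
    rw [hf]
    simp only [toAdd_ofAdd, Prod.mk.injEq]
    rw [if_neg (fun h => hη h.2), if_neg (fun h => h_ne01 h.1)]
  have hfB' : ∀ ζ : ZMod n, ζ ≠ mm → f (Multiplicative.ofAdd ((1 : ZMod n), ζ)) = 1 := by
    intro ζ hζ
    rw [hf]
    simp only [toAdd_ofAdd, Prod.mk.injEq]
    rw [if_neg (fun h => h_ne10 h.1), if_neg (fun h => hζ h.2)]
  have keyA : ∀ η : ZMod n, (φ cw).left (Multiplicative.ofAdd ((0 : ZMod n), η))
      = (f (Multiplicative.ofAdd ((0 : ZMod n), η)))⁻¹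
        * f (Multiplicative.ofAdd ((0 : ZMod n), 1 + η)) := by
    intro η
    rw [hct]
    show (f (Multiplicative.ofAdd ((0 : ZMod n), η)))⁻¹
        * f (β * Multiplicative.ofAdd ((0 : ZMod n), η)) = _
    have hmul : β * Multiplicative.ofAdd ((0 : ZMod n), η)
        = Multiplicative.ofAdd ((0 : ZMod n), 1 + η) := by
      apply Multiplicative.toAdd.injective
      rw [toAdd_mul]
      show ((0 : ZMod n), (1 : ZMod n)) + ((0 : ZMod n), η) = Multiplicative.toAdd _
      rw [toAdd_ofAdd, Prod.mk_add_mk, add_zero]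
    rw [hmul]
  have keyB : ∀ ζ : ZMod n, (φ cw).left (Multiplicative.ofAdd ((1 : ZMod n), ζ))
      = (f (Multiplicative.ofAdd ((1 : ZMod n), ζ)))⁻¹
        * f (Multiplicative.ofAdd ((1 : ZMod n), 1 + ζ)) := by
    intro ζ
    rw [hct]
    show (f (Multiplicative.ofAdd ((1 : ZMod n), ζ)))⁻¹
        * f (β * Multiplicative.ofAdd ((1 : ZMod n), ζ)) = _
    have hmul : β * Multiplicative.ofAdd ((1 : ZMod n), ζ)
        = Multiplicative.ofAdd ((1 : ZMod n), 1 + ζ) := by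
      apply Multiplicative.toAdd.injective
      rw [toAdd_mul]
      show ((0 : ZMod n), (1 : ZMod n)) + ((1 : ZMod n), ζ) = Multiplicative.toAdd _
      rw [toAdd_ofAdd, Prod.mk_add_mk, zero_add]
    rw [hmul]
  have hctA : ∀ η : ZMod n, (φ cw).left (Multiplicative.ofAdd ((0 : ZMod n), η)) = AAf n η := by
    intro η
    by_cases hη : η = 0
    · subst hη
      rw [keyA, hf00, add_zero, hfA' 1 h_ne10, AAf, if_pos rfl]
      decide
    · by_cases hη1 : η = -1
      · subst hη1
        rw [keyA, hfA' _ hη, show (1 + (-1) : ZMod n) = 0 by ring, hf00, AAf,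
          if_neg hη, if_pos rfl]
        decide
      · rw [keyA, hfA' _ hη, hfA' _ (fun h => hη1 (by linear_combination h)), AAf,
          if_neg hη, if_neg hη1]
        decide
  have hctB : ∀ ζ : ZMod n, (φ cw).left (Multiplicative.ofAdd ((1 : ZMod n), ζ))
      = BBf n mm ζ := by
    intro ζ
    by_cases hζ : ζ = mm
    · subst hζ
      rw [keyB, hf1mm, hfB' _ (fun h => h_ne10 (by linear_combination h)), BBf,
        if_pos (Or.inl rfl)]
      decide
    · by_cases hζ1 : ζ = mm - 1
      · subst hζ1
        rw [keyB, hfB' _ hζ, show (1 + (mm - 1) : ZMod n) = mm by ring, hf1mm, BBf,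
          if_pos (Or.inr rfl)]
        decide
      · rw [keyB, hfB' _ hζ, hfB' _ (fun h => hζ1 (by linear_combination h)), BBf,
          if_neg (by rintro (h | h); exact hζ h; exact hζ1 h)]
        decide
  -- the contradiction
  intro hone
  have hF := congrArg SemidirectProduct.left hone
  simp only [SemidirectProduct.left_inl, SemidirectProduct.one_left] at hF
  have hF1 := congrArg (fun F => F (1 : Bg n)) hF
  simp only [Pi.one_apply] at hF1
  have hS : (∑ Ty ∈ idxS n,
      kk ((φ cw).left ((φ (.of 3)).right ^ Ty.2 * 1))
         ((φ cw).left ((φ (.of 2)).right * (φ (.of 3)).right ^ (eT n Ty.1 Ty.2) * 1))) = 1 := by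
    have hclean : ∀ Ty ∈ idxS n,
        kk ((φ cw).left ((φ (.of 3)).right ^ Ty.2 * 1))
           ((φ cw).left ((φ (.of 2)).right * (φ (.of 3)).right ^ (eT n Ty.1 Ty.2) * 1))
        = kk (AAf n ((Ty.2 : ℕ) : ZMod n))
             (BBf n mm ((sT n Ty.1 : ℕ) - ((Ty.2 : ℕ) : ZMod n))) := by
      intro Ty hTy
      have hy : Ty.2 < n := by
        have := (Finset.mem_product.mp hTy).2
        simpa using this
      rw [hb₁, hb₂, mul_one, mul_one, hβpow, hb1pow, hctA, hctB, cast_eT hn0 _ _ hy]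
    rw [Finset.sum_congr rfl hclean, Finset.sum_product]
    have hinner : ∀ T ∈ n.primeFactors.powerset,
        (∑ y ∈ Finset.range n, kk (AAf n ((y : ℕ) : ZMod n))
          (BBf n mm ((sT n T : ℕ) - ((y : ℕ) : ZMod n))))
        = (if ((sT n T : ℕ) : ZMod n) = mm then 1 else 0)
          + (if ((sT n T : ℕ) : ZMod n) = mm - 2 then 1 else 0) := by
      intro T _
      have hsub : ({0, n-1} : Finset ℕ) ⊆ Finset.range n := by
        intro z hz
        simp only [Finset.mem_insert, Finset.mem_singleton] at hz
        rcases hz with rfl | rfl <;> simp [Finset.mem_range] <;> omega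
      rw [← Finset.sum_subset hsub]
      · rw [Finset.sum_pair (show (0:ℕ) ≠ n-1 by omega)]
        have hc0 : ((0 : ℕ) : ZMod n) = 0 := Nat.cast_zero
        have hcn1 : ((n - 1 : ℕ) : ZMod n) = -1 := by
          rw [Nat.cast_sub (by omega), ZMod.natCast_self, Nat.cast_one, zero_sub]
        rw [hc0, hcn1]
        have hA0 : AAf n (0 : ZMod n) = .r 3 := by rw [AAf, if_pos rfl]
        have hAn1 : AAf n (-1 : ZMod n) = .r 1 := by
          rw [AAf, if_neg (by intro h; exact h_ne10 (neg_eq_zero.mp h)), if_pos rfl]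
        rw [hA0, hAn1, sub_zero, sub_neg_eq_add]
        exact inner_val n hn hodd mm _
      · intro y hy hy2
        simp only [Finset.mem_insert, Finset.mem_singleton, not_or] at hy2
        rw [Finset.mem_range] at hy
        have hyne0 : ((y : ℕ) : ZMod n) ≠ 0 := by
          intro h
          rw [ZMod.natCast_eq_zero_iff] at h
          have := Nat.le_of_dvd (by omega) h
          omega
        have hynen1 : ((y : ℕ) : ZMod n) ≠ -1 := by
          intro h
          have h2 : ((y + 1 : ℕ) : ZMod n) = 0 := by
            push_cast
            rw [h]
            ring
          rw [ZMod.natCast_eq_zero_iff] at h2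
          have := Nat.le_of_dvd (by omega) h2
          omega
        have : AAf n ((y : ℕ) : ZMod n) = 1 := by
          rw [AAf, if_neg hyne0, if_neg hynen1]
        rw [this, kk_one_left]
    rw [Finset.sum_congr rfl hinner, Finset.sum_add_distrib]
    show mu n mm + mu n (mm - 2) = 1
    exact hmm
  rw [hS] at hF1
  exact (by decide : ¬ (hD (Multiplicative.ofAdd (1 : ZMod 2)) = 1)) hF1

end Gside

section Assemble

variable (n : ℕ)

abbrev Nker (n : ℕ) : Subgroup (WreathProduct D4 (Bg n)) :=
  (SemidirectProduct.rightHom :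
    WreathProduct D4 (Bg n) →* Bg n).ker

lemma invariety_ker : InVariety (Nker n) D4 := by
  intro k w hw ψ
  set leftN : (Nker n) →* (Bg n → D4) :=
    { toFun := fun u => (u : WreathProduct D4 (Bg n)).left
      map_one' := rfl
      map_mul' := by
        intro u v
        have hu : (u : WreathProduct D4 (Bg n)).right = 1 := by
          have := u.2
          rwa [MonoidHom.mem_ker] at this
        show ((u : WreathProduct D4 (Bg n)) * v).left = _
        rw [SemidirectProduct.mul_left, hu, map_one]
        rfl } with hleftN
  have hleft : (↑(ψ w) : WreathProduct D4 (Bg n)).left = 1 := by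
    funext b
    have := hw ((Pi.evalMonoidHom (fun _ : Bg n => D4) b).comp (leftN.comp ψ))
    simpa [hleftN] using this
  have hright : (↑(ψ w) : WreathProduct D4 (Bg n)).right = 1 := by
    have := (ψ w).2
    rwa [MonoidHom.mem_ker] at this
  have : (↑(ψ w) : WreathProduct D4 (Bg n)) = 1 :=
    SemidirectProduct.ext (by rw [hleft]; rfl) (by rw [hright]; rfl)
  exact Subtype.ext this

lemma quot_comm (x y : WreathProduct D4 (Bg n) ⧸ (Nker n)) : x * y = y * x := by
  induction x using QuotientGroup.induction_on with | H a => ?_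
  induction y using QuotientGroup.induction_on with | H b => ?_
  show ((a : WreathProduct D4 (Bg n) ⧸ (Nker n)) * b) = (b : _) * a
  rw [← QuotientGroup.mk_mul, ← QuotientGroup.mk_mul, QuotientGroup.eq]
  have : ((a * b)⁻¹ * (b * a)) ∈ (Nker n) := by
    rw [MonoidHom.mem_ker, map_mul, map_inv, map_mul, map_mul]
    rw [mul_comm (SemidirectProduct.rightHom a) (SemidirectProduct.rightHom b)]
    group
  exact this

lemma bg_pow (s : Bg n) : s ^ n = 1 := by
  apply Multiplicative.toAdd.injective
  rw [toAdd_pow]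
  show n • Multiplicative.toAdd s = (0 : ZMod n × ZMod n)
  have h1 : ∀ z : ZMod n, n • z = 0 := by
    intro z
    rw [nsmul_eq_mul, ZMod.natCast_self, zero_mul]
  have : n • Multiplicative.toAdd s
      = (n • (Multiplicative.toAdd s).1, n • (Multiplicative.toAdd s).2) := rfl
  rw [this, h1, h1]
  rfl

lemma quot_pow (g : WreathProduct D4 (Bg n) ⧸ (Nker n)) : g ^ n = 1 := by
  induction g using QuotientGroup.induction_on with | H a => ?_
  show ((a : WreathProduct D4 (Bg n) ⧸ (Nker n))) ^ n = 1
  rw [← QuotientGroup.mk_pow, QuotientGroup.eq_one_iff]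
  rw [MonoidHom.mem_ker, map_pow]
  exact bg_pow n _

end Assemble
end DW

theorem dihedral_wreath_Cn_strictly_smaller (n : ℕ) (hn : 3 ≤ n) (hodd : Odd n) :
    ∃ (G : Type) (hG : Group G), letI := hG;
      (∃ (N : Subgroup G) (hN : N.Normal),
        InVariety N (DihedralGroup 4) ∧
        (letI := hN;
          (∀ x y : G ⧸ N, x * y = y * x) ∧ ∀ g : G ⧸ N, g ^ n = 1)) ∧
      ∃ (k : ℕ) (w : FreeGroup (Fin k)),
        IsGroupLaw (WreathProduct (DihedralGroup 4) (Multiplicative (ZMod n))) w ∧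
        ¬ IsGroupLaw G w := by
  obtain ⟨φbad, hφbad⟩ := DW.not_law_G n hn hodd
  refine ⟨WreathProduct (DihedralGroup 4) (DW.Bg n), inferInstance,
    ⟨DW.Nker n, inferInstance, DW.invariety_ker n, DW.quot_comm n, DW.quot_pow n⟩,
    4, DW.word n, fun φ => DW.law_W n hn φ, fun h => hφbad (h φbad)⟩
end
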